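/- Let 𝔤₁₇ be the Lie algebra with nonzero brackets [e₁,e₃]=e₅, [e₁,e₄]=e₆, [e₂,e₃]=e₆ and ω = e¹∧e⁶ + e²∧e⁵ + e³∧e⁴. For the compatible complex structure J with J(e₁)=ψ₁₁e₁ − ((1+ψ₁₁²)/ψ₁₂)e₂, J(e₂)=ψ₁₂e₁ − ψ₁₁e₂, J(e₃)=ψ₁₁e₃ + 2((1+ψ₁₁²)/ψ₁₂)e₄, J(e₄)=−(ψ₁₂/2)e₃ − ψ₁₁e₄, J(e₅)=ψ₁₁e₅ + ((1+ψ₁₁²)/ψ₁₂)e₆, J(e₆)=−ψ₁₂e₅ − ψ₁₁e₆ (ψ₁₂ ≠ 0), the curvature tensor of g = ω∘J has nonzero components R¹²₁⁵ = ψ₁₁ψ₁₂, R¹²₁⁶ = 1+ψ₁₁², R¹²₂⁵ = ψ₁₂², R¹²₂⁶ = ψ₁₁ψ₁₂, and after lowering the index the single nonzero component R(e₁,e₂,e₁,e₂) = −ψ₁₂. -/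

import Mathlib

noncomputable section

/-- The underlying space ℝ⁶ of the Lie algebra 𝔤₁₇. -/
abbrev V17 : Type := Fin 6 → ℝ

/-- Standard basis vectors e₁,…,e₆ (0-indexed). -/
def e17 (i : Fin 6) : V17 := Pi.single i 1

/-- Bracket of 𝔤₁₇: [e₁,e₃]=e₅, [e₁,e₄]=e₆, [e₂,e₃]=e₆. -/
def br17 (X Y : V17) : V17 :=
  ![0, 0, 0, 0,
    X 0 * Y 2 - X 2 * Y 0,
    (X 0 * Y 3 - X 3 * Y 0) + (X 1 * Y 2 - X 2 * Y 1)]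

/-- ω = e¹∧e⁶ + e²∧e⁵ + e³∧e⁴. -/
def om17 (X Y : V17) : ℝ :=
  (X 0 * Y 5 - X 5 * Y 0) + (X 1 * Y 4 - X 4 * Y 1) + (X 2 * Y 3 - X 3 * Y 2)

/-- The compatible complex structure J on 𝔤₁₇ with parameters ψ₁₁ and ψ₁₂ ≠ 0:
J(e₁)=ψ₁₁e₁ − ((1+ψ₁₁²)/ψ₁₂)e₂, J(e₂)=ψ₁₂e₁ − ψ₁₁e₂,
J(e₃)=ψ₁₁e₃ + 2((1+ψ₁₁²)/ψ₁₂)e₄, J(e₄)=−(ψ₁₂/2)e₃ − ψ₁₁e₄,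
J(e₅)=ψ₁₁e₅ + ((1+ψ₁₁²)/ψ₁₂)e₆, J(e₆)=−ψ₁₂e₅ − ψ₁₁e₆. -/
def J17 (p q : ℝ) (X : V17) : V17 :=
  ![p * X 0 + q * X 1,
    -((1 + p ^ 2) / q) * X 0 - p * X 1,
    p * X 2 - (q / 2) * X 3,
    2 * ((1 + p ^ 2) / q) * X 2 - p * X 3,
    p * X 4 - q * X 5,
    ((1 + p ^ 2) / q) * X 4 - p * X 5]

/-- Associated metric g(X,Y) = ω(X, JY). -/
def g17 (p q : ℝ) (X Y : V17) : ℝ := om17 X (J17 p q Y)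

/-!
Since ω is nondegenerate and J² = −1, the metric g is nondegenerate, so the Koszul formula
determines ∇ uniquely; solving it gives an explicit bilinear map with values in span(e₃, …, e₆).
The curvature is then a polynomial computation, and after lowering the index it collapses to
g(R(X, Y)Z, W) = −ψ₁₂ (e¹∧e²)(X, Y) (e¹∧e²)(Z, W), from which every component is read off.
-/

/-- The Levi-Civita connection of `g17`, obtained by solving the Koszul formula. -/
def nabla17 (p q : ℝ) (X Y : V17) : V17 :=
  ![0, 0,
    ((p^2 - 1)/2) * X 0 * Y 0 + (q^2/2) * X 1 * Y 1 + (p*q/2) * (X 1 * Y 0 + X 0 * Y 1),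
    (1 + p^2) * (X 1 * Y 0 + X 0 * Y 1) + (p*(1+p^2)/q) * X 0 * Y 0 + p*q * X 1 * Y 1,
    (1 + p^2) * X 0 * Y 2 + p^2 * X 2 * Y 0 + p*q * (X 2 * Y 1 + X 1 * Y 2)
      - (q^2/2) * (X 3 * Y 1 + X 1 * Y 3) - (p*q/2) * (X 3 * Y 0 + X 0 * Y 3),
    (1 + p^2) * X 1 * Y 2 + p^2 * X 2 * Y 1 + (p*(1+p^2)/q) * (X 2 * Y 0 + X 0 * Y 2)
      + ((1 - p^2)/2) * X 0 * Y 3 - ((1 + p^2)/2) * X 3 * Y 0 - (p*q/2) * (X 3 * Y 1 + X 1 * Y 3)]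

def curv17 (p q : ℝ) (X Y Z : V17) : V17 :=
  nabla17 p q X (nabla17 p q Y Z) - nabla17 p q Y (nabla17 p q X Z) - nabla17 p q (br17 X Y) Z

/-- `(e¹ ∧ e²)(X, Y)`, with 0-indexed coordinates. -/
def wedge12 (X Y : V17) : ℝ := X 0 * Y 1 - X 1 * Y 0

lemma J17_J17 {p q : ℝ} (hq : q ≠ 0) (X : V17) : J17 p q (J17 p q X) = -X := by
  funext i
  fin_cases i <;> simp [J17] <;> field_simp <;> ring

lemma g17_J17 {p q : ℝ} (hq : q ≠ 0) (X Y : V17) : g17 p q X (J17 p q Y) = -om17 X Y := by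
  rw [g17, J17_J17 hq]
  simp only [om17, Pi.neg_apply]
  ring

lemma eq_of_om17_eq {W W' : V17} (h : ∀ Z, om17 W Z = om17 W' Z) : W = W' := by
  funext i
  -- ω pairs eᵢ with e₇₋ᵢ, so ω(W, e₇₋ᵢ) = ± Wᵢ
  have hi := h (e17 i.rev)
  fin_cases i <;> simpa [om17, e17] using hi

lemma eq_of_g17_eq {p q : ℝ} (hq : q ≠ 0) {W W' : V17} (h : ∀ Z, g17 p q W Z = g17 p q W' Z) :
    W = W' := by
  refine eq_of_om17_eq fun Z => ?_
  simpa [g17_J17 hq] using h (J17 p q Z)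

lemma koszul_nabla17 {p q : ℝ} (hq : q ≠ 0) (X Y Z : V17) :
    2 * g17 p q (nabla17 p q X Y) Z
      = g17 p q (br17 X Y) Z + g17 p q (br17 Z X) Y + g17 p q X (br17 Z Y) := by
  simp only [g17, om17, J17, nabla17, br17, Matrix.cons_val]
  field_simp
  ring

lemma eq_nabla17_of_koszul {p q : ℝ} (hq : q ≠ 0) {nabla : V17 → V17 → V17}
    (hkoszul : ∀ X Y Z : V17,
      2 * g17 p q (nabla X Y) Z
        = g17 p q (br17 X Y) Z + g17 p q (br17 Z X) Y + g17 p q X (br17 Z Y)) :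
    nabla = nabla17 p q :=
  funext fun X => funext fun Y => eq_of_g17_eq hq fun Z => by
    linarith [hkoszul X Y Z, koszul_nabla17 (p := p) hq X Y Z]

lemma curv17_e0_e1_e0 {p q : ℝ} (hq : q ≠ 0) :
    curv17 p q (e17 0) (e17 1) (e17 0) = ![0, 0, 0, 0, p * q, 1 + p ^ 2] := by
  funext i
  fin_cases i <;> simp [curv17, nabla17, br17, e17] <;> field_simp <;> ring

lemma curv17_e0_e1_e1 {p q : ℝ} (hq : q ≠ 0) :
    curv17 p q (e17 0) (e17 1) (e17 1) = ![0, 0, 0, 0, q ^ 2, p * q] := by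
  funext i
  fin_cases i <;> simp [curv17, nabla17, br17, e17] <;> field_simp <;> ring

lemma g17_curv17 {p q : ℝ} (hq : q ≠ 0) (X Y Z W : V17) :
    g17 p q (curv17 p q X Y Z) W = -q * wedge12 X Y * wedge12 Z W := by
  simp only [g17, om17, J17, curv17, nabla17, br17, wedge12, Pi.sub_apply, Matrix.cons_val]
  field_simp
  ring

lemma wedge12_e17_eq_zero {i j : Fin 6} (h : ({i, j} : Finset (Fin 6)) ≠ {0, 1}) :
    wedge12 (e17 i) (e17 j) = 0 := by
  fin_cases i <;> fin_cases j <;> first | exact absurd (by decide) h | simp [wedge12, e17]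

/-- the curvature tensor of g = ω∘J on 𝔤₁₇ has components
R¹²₁⁵ = ψ₁₁ψ₁₂, R¹²₁⁶ = 1+ψ₁₁², R¹²₂⁵ = ψ₁₂², R¹²₂⁶ = ψ₁₁ψ₁₂, and after lowering
the index the single nonzero component is R(e₁,e₂,e₁,e₂) = −ψ₁₂. -/
theorem g17_curvature (p q : ℝ) (hq : q ≠ 0)
    (nabla : V17 → V17 → V17)
    (hkoszul : ∀ X Y Z : V17,
      2 * g17 p q (nabla X Y) Z
        = g17 p q (br17 X Y) Z + g17 p q (br17 Z X) Y + g17 p q X (br17 Z Y))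
    (R : V17 → V17 → V17 → V17)
    (hR : ∀ X Y Z : V17,
      R X Y Z = nabla X (nabla Y Z) - nabla Y (nabla X Z) - nabla (br17 X Y) Z) :
    R (e17 0) (e17 1) (e17 0) 4 = p * q ∧
    R (e17 0) (e17 1) (e17 0) 5 = 1 + p ^ 2 ∧
    R (e17 0) (e17 1) (e17 1) 4 = q ^ 2 ∧
    R (e17 0) (e17 1) (e17 1) 5 = p * q ∧
    g17 p q (R (e17 0) (e17 1) (e17 0)) (e17 1) = -q ∧
    (∀ i j k l : Fin 6,
      ¬(({i, j} : Finset (Fin 6)) = {0, 1} ∧ ({k, l} : Finset (Fin 6)) = {0, 1}) →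
      g17 p q (R (e17 i) (e17 j) (e17 k)) (e17 l) = 0) := by
  obtain rfl := eq_nabla17_of_koszul hq hkoszul
  obtain rfl : R = curv17 p q := funext fun X => funext fun Y => funext (hR X Y)
  refine ⟨by simp [curv17_e0_e1_e0 hq], by simp [curv17_e0_e1_e0 hq],
    by simp [curv17_e0_e1_e1 hq], by simp [curv17_e0_e1_e1 hq],
    by simp [g17_curv17 hq, wedge12, e17], fun i j k l h => ?_⟩
  rw [g17_curv17 hq]
  rcases not_and_or.mp h with hij | hkl
  · rw [wedge12_e17_eq_zero hij]; ring
  · rw [wedge12_e17_eq_zero hkl]; ring
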